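/- arXiv:quant-ph/0307220 — 2 statements merged into one kernel-verified Lean document; each statement's English description precedes it below -/
import Mathlib

section
/- Let g : E → ℝ be a real positive definite function on a group E with g(0) = 1. Then for any x ∈ E such that there exists z ∈ E with 2z = x, we have g(z) ≤ √((1 + g(x))/2) ≤ (g(x) + 3)/4. -/
/-- A real-valued function `g : E → ℝ` on an additive group is positive definite if for
every `k` and every `x_1, …, x_k ∈ E`, the matrix `(g (x i - x j))` is positive
semidefinite. -/
def IsPosDefFnReal {E : Type*} [AddGroup E] (g : E → ℝ) : Prop :=
  ∀ (k : ℕ) (x : Fin k → E),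
    (Matrix.of fun i j => g (x i - x j)).PosSemidef

/-!
Testing positive definiteness on the three points `0, z, 2z` with the vector `(1, -2 g(z), 1)`
gives `g(z)² ≤ (1 + g(2z))/2`; the second inequality is AM-GM, `√u ≤ (u + 1)/2`.
-/

theorem Real.sqrt_le_add_one_div_two {u : ℝ} (hu : -1 ≤ u) : √u ≤ (u + 1) / 2 :=
  Real.sqrt_le_iff.mpr ⟨by linarith, by nlinarith [sq_nonneg (u - 1)]⟩

namespace IsPosDefFnReal

variable {E : Type*} [AddGroup E] {g : E → ℝ}

theorem map_neg (hg : IsPosDefFnReal g) (x : E) : g (-x) = g x := by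
  simpa [Matrix.conjTranspose_apply] using congrFun (congrFun (hg 2 ![0, x]).1 1) 0

theorem quadratic_nonneg (hg : IsPosDefFnReal g) (z : E) (t : ℝ) :
    0 ≤ (2 + t ^ 2) * g 0 + 4 * t * g z + 2 * g (z + z) := by
  have hsub : z - (z + z) = -z := by rw [sub_add_eq_sub_sub_swap, sub_self, zero_sub]
  have h := (hg 3 ![0, z, z + z]).dotProduct_mulVec_nonneg ![1, t, 1]
  simp only [Matrix.mulVec, dotProduct, Fin.sum_univ_three, Matrix.of_apply,
    Matrix.cons_val_zero, Matrix.cons_val_one, Matrix.cons_val_two, Matrix.head_cons,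
    Matrix.tail_cons, hsub, sub_self, sub_zero, zero_sub, add_sub_cancel_right,
    hg.map_neg, star_trivial] at h
  linarith

theorem sq_le (hg : IsPosDefFnReal g) (h0 : g 0 = 1) (z : E) :
    g z ^ 2 ≤ (1 + g (z + z)) / 2 := by
  have h := hg.quadratic_nonneg z (-2 * g z)
  rw [h0] at h
  linarith

end IsPosDefFnReal

theorem pd_fn_half_bound {E : Type*} [AddGroup E] (g : E → ℝ)
    (hg : IsPosDefFnReal g) (h0 : g 0 = 1) (x z : E) (hz : z + z = x) :
    g z ≤ Real.sqrt ((1 + g x) / 2) ∧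
    Real.sqrt ((1 + g x) / 2) ≤ (g x + 3) / 4 := by
  have hsq : g z ^ 2 ≤ (1 + g x) / 2 := hz ▸ hg.sq_le h0 z
  refine ⟨(le_abs_self _).trans (Real.abs_le_sqrt hsq), ?_⟩
  have hu : -1 ≤ (1 + g x) / 2 := by nlinarith [sq_nonneg (g z)]
  exact (Real.sqrt_le_add_one_div_two hu).trans_eq (by ring)
end

section
/- Let B(n) ⊂ ℝⁿ be the ball of radius n^{−10} + n^{−11} and let A ⊂ ℝⁿ be the 'annular slab' {z : |‖P_{y⊥}(z)‖ − n^{−10}| ≤ n^{−100}/2 and ‖P_y(z)‖ ≤ n^{−100}/2} for a fixed non-zero vector y. Then vol(A)/vol(B(n)) ≥ n^{−180}/10 for all sufficiently large n. -/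
/-!
Write `r = n⁻¹⁰`, `ε = n⁻¹⁰⁰ / 2`, `R = r (1 + 1/n)`. An orthonormal basis whose first vector
is `y / ‖y‖` carries the slab, measure-preservingly, onto `[-ε, ε] × (B(r + ε) \ B°(r - ε))`
in `ℝ × ℝⁿ⁻¹`, of volume `2ε ((r + ε)ⁿ⁻¹ - (r - ε)ⁿ⁻¹) ωₙ₋₁`. The unit ball of `ℝⁿ` lies in
the cylinder `[-1, 1] × Bⁿ⁻¹`, so `vol B(R) ≤ 2 Rⁿ ωₙ₋₁`. Bernoulli's inequality gives
`(r + ε)ⁿ⁻¹ - (r - ε)ⁿ⁻¹ ≥ (n - 1) ε rⁿ⁻²`, and `(1 + 1/n)ⁿ ≤ e < 3`, so the ratio is at least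
`(n - 1) ε² / (3 r²) = (n - 1) n⁻¹⁸⁰ / 12`.
-/

open MeasureTheory Metric Module

theorem OrthonormalBasis.exists_apply_eq {𝕜 E ι : Type*} [RCLike 𝕜] [NormedAddCommGroup E]
    [InnerProductSpace 𝕜 E] [FiniteDimensional 𝕜 E] [Fintype ι]
    (card_ι : finrank 𝕜 E = Fintype.card ι) (i : ι) {u : E} (hu : ‖u‖ = 1) :
    ∃ b : OrthonormalBasis ι 𝕜 E, b i = u := by
  have hv : Orthonormal 𝕜 (({i} : Set ι).domRestrict fun _ => u) :=
    orthonormal_subsingleton_iff.2 fun _ => hu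
  obtain ⟨b, hb⟩ := hv.exists_orthonormalBasis_extension_of_card_eq card_ι
  exact ⟨b, hb i rfl⟩

theorem MeasureTheory.Measure.addHaar_closedBall_diff_ball {E : Type*} [NormedAddCommGroup E]
    [NormedSpace ℝ E] [MeasurableSpace E] [BorelSpace E] [FiniteDimensional ℝ E] [Nontrivial E]
    (μ : Measure E) [μ.IsAddHaarMeasure] (x : E) {r R : ℝ} (hr : 0 ≤ r) (hrR : r ≤ R) :
    μ (closedBall x R \ ball x r) =
      ENNReal.ofReal (R ^ finrank ℝ E - r ^ finrank ℝ E) * μ (ball 0 1) := by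
  rw [measure_sdiff (ball_subset_closedBall.trans (closedBall_subset_closedBall hrR))
      measurableSet_ball.nullMeasurableSet measure_ball_lt_top.ne,
    addHaar_closedBall μ x (hr.trans hrR), addHaar_ball μ x hr,
    ← ENNReal.sub_mul fun _ _ => measure_ball_lt_top.ne, ENNReal.ofReal_sub _ (by positivity)]

section InnerProductSpace

variable {E : Type*} [NormedAddCommGroup E] [InnerProductSpace ℝ E]

theorem inner_div_norm_sq_smul_eq (y z : E) :
    (inner ℝ y z / ‖y‖ ^ 2) • y = inner ℝ (‖y‖⁻¹ • y) z • (‖y‖⁻¹ • y) := by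
  rw [real_inner_smul_left, smul_smul]
  congr 1
  ring

theorem norm_sub_inner_smul_sq {u : E} (hu : ‖u‖ = 1) (z : E) :
    ‖z - inner ℝ u z • u‖ ^ 2 = ‖z‖ ^ 2 - inner ℝ u z ^ 2 := by
  rw [norm_sub_sq_real, real_inner_smul_right, norm_smul, hu, real_inner_comm,
    Real.norm_eq_abs, mul_one, sq_abs]
  ring

def annularSlab (y : E) (r ε : ℝ) : Set E :=
  {z | |‖z - (inner ℝ y z / ‖y‖ ^ 2) • y‖ - r| ≤ ε ∧ ‖(inner ℝ y z / ‖y‖ ^ 2) • y‖ ≤ ε}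

end InnerProductSpace

namespace EuclideanSpace

noncomputable def headTailEquiv (m : ℕ) :
    EuclideanSpace ℝ (Fin (m + 1)) ≃ᵐ ℝ × EuclideanSpace ℝ (Fin m) :=
  (MeasurableEquiv.toLp 2 (Fin (m + 1) → ℝ)).symm.trans <|
    (MeasurableEquiv.piFinSuccAbove (fun _ => ℝ) 0).trans <|
      MeasurableEquiv.prodCongr (MeasurableEquiv.refl ℝ) (MeasurableEquiv.toLp 2 (Fin m → ℝ))

theorem measurePreserving_headTailEquiv (m : ℕ) : MeasurePreserving (headTailEquiv m) :=
  (volume_preserving_symm_measurableEquiv_toLp _).trans <|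
    (volume_preserving_piFinSuccAbove (fun _ => ℝ) 0).trans <|
      (MeasurePreserving.id volume).prod (volume_preserving_symm_measurableEquiv_toLp _).symm

variable {m : ℕ}

@[simp]
theorem headTailEquiv_fst (x : EuclideanSpace ℝ (Fin (m + 1))) : (headTailEquiv m x).1 = x 0 :=
  rfl

@[simp]
theorem headTailEquiv_snd_apply (x : EuclideanSpace ℝ (Fin (m + 1))) (i : Fin m) :
    (headTailEquiv m x).2 i = x i.succ :=
  rfl

theorem norm_sq_eq_sq_add_norm_sq_headTailEquiv_snd (x : EuclideanSpace ℝ (Fin (m + 1))) :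
    ‖x‖ ^ 2 = x 0 ^ 2 + ‖(headTailEquiv m x).2‖ ^ 2 := by
  simp [EuclideanSpace.norm_sq_eq, Fin.sum_univ_succ]

theorem measureReal_ball_succ_le :
    volume.real (ball (0 : EuclideanSpace ℝ (Fin (m + 1))) 1) ≤
      2 * volume.real (ball (0 : EuclideanSpace ℝ (Fin m)) 1) := by
  have hsub : ball (0 : EuclideanSpace ℝ (Fin (m + 1))) 1 ⊆
      headTailEquiv m ⁻¹' (Set.Icc (-1) 1 ×ˢ ball 0 1) := by
    intro x hx
    rw [mem_ball_zero_iff] at hx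
    have hx' := norm_sq_eq_sq_add_norm_sq_headTailEquiv_snd x
    refine ⟨abs_le.1 ?_, mem_ball_zero_iff.2 ?_⟩
    · rw [headTailEquiv_fst]
      nlinarith [sq_abs (x 0), abs_nonneg (x 0), norm_nonneg x]
    · nlinarith [norm_nonneg x, norm_nonneg (headTailEquiv m x).2, sq_nonneg (x 0)]
  have hcyl : volume (headTailEquiv m ⁻¹' (Set.Icc (-1) 1 ×ˢ ball 0 1)) =
      2 * volume (ball (0 : EuclideanSpace ℝ (Fin m)) 1) := by
    rw [(measurePreserving_headTailEquiv m).measure_preimage_equiv, Measure.volume_eq_prod,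
      Measure.prod_prod, Real.volume_Icc]
    norm_num
  calc volume.real (ball (0 : EuclideanSpace ℝ (Fin (m + 1))) 1)
      ≤ volume.real (headTailEquiv m ⁻¹' (Set.Icc (-1) 1 ×ˢ ball 0 1)) :=
        measureReal_mono hsub (by rw [hcyl]; finiteness)
    _ = 2 * volume.real (ball (0 : EuclideanSpace ℝ (Fin m)) 1) := by
      simp [measureReal_def, hcyl]

theorem exists_measurePreserving_norm_proj_eq {y : EuclideanSpace ℝ (Fin (m + 1))} (hy : y ≠ 0) :
    ∃ Φ : EuclideanSpace ℝ (Fin (m + 1)) ≃ᵐ ℝ × EuclideanSpace ℝ (Fin m),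
      MeasurePreserving Φ ∧ ∀ z, ‖(inner ℝ y z / ‖y‖ ^ 2) • y‖ = |(Φ z).1| ∧
        ‖z - (inner ℝ y z / ‖y‖ ^ 2) • y‖ = ‖(Φ z).2‖ := by
  set u := ‖y‖⁻¹ • y
  have hu : ‖u‖ = 1 := norm_smul_inv_norm hy
  obtain ⟨b, hb⟩ := OrthonormalBasis.exists_apply_eq (𝕜 := ℝ) (ι := Fin (m + 1)) (by simp) 0 hu
  refine ⟨b.repr.toMeasurableEquiv.trans (headTailEquiv m),
    b.measurePreserving_repr.trans (measurePreserving_headTailEquiv m), fun z => ?_⟩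
  have hfst : b.repr z 0 = inner ℝ u z := by rw [b.repr_apply_apply, hb]
  simp only [MeasurableEquiv.trans_apply, LinearIsometryEquiv.coe_toMeasurableEquiv,
    headTailEquiv_fst, hfst, inner_div_norm_sq_smul_eq]
  refine ⟨by rw [norm_smul, hu, mul_one, Real.norm_eq_abs], ?_⟩
  rw [← sq_eq_sq₀ (norm_nonneg _) (norm_nonneg _), norm_sub_inner_smul_sq hu,
    ← b.repr.norm_map z, norm_sq_eq_sq_add_norm_sq_headTailEquiv_snd, hfst]
  ring

theorem annularSlab_eq_preimage {y : EuclideanSpace ℝ (Fin (m + 1))} (r ε : ℝ)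
    {Φ : EuclideanSpace ℝ (Fin (m + 1)) ≃ᵐ ℝ × EuclideanSpace ℝ (Fin m)}
    (hΦ : ∀ z, ‖(inner ℝ y z / ‖y‖ ^ 2) • y‖ = |(Φ z).1| ∧
        ‖z - (inner ℝ y z / ‖y‖ ^ 2) • y‖ = ‖(Φ z).2‖) :
    annularSlab y r ε = Φ ⁻¹' (Set.Icc (-ε) ε ×ˢ (closedBall 0 (r + ε) \ ball 0 (r - ε))) := by
  ext z
  simp only [annularSlab, Set.mem_ofPred_eq, Set.mem_preimage, Set.mem_prod, Set.mem_Icc,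
    Set.mem_sdiff, mem_closedBall_zero_iff, mem_ball_zero_iff, not_lt, (hΦ z).1, (hΦ z).2,
    abs_le]
  constructor <;> rintro ⟨⟨h₁, h₂⟩, h₃, h₄⟩ <;> refine ⟨⟨?_, ?_⟩, ?_, ?_⟩ <;> linarith

theorem measureReal_annularSlab [NeZero m] {y : EuclideanSpace ℝ (Fin (m + 1))} (hy : y ≠ 0)
    {r ε : ℝ} (hε : 0 ≤ ε) (hεr : ε ≤ r) :
    volume.real (annularSlab y r ε) =
      2 * ε * (((r + ε) ^ m - (r - ε) ^ m) *
        volume.real (ball (0 : EuclideanSpace ℝ (Fin m)) 1)) := by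
  obtain ⟨Φ, hΦ, hnorm⟩ := exists_measurePreserving_norm_proj_eq hy
  have hpow : (r - ε) ^ m ≤ (r + ε) ^ m := pow_le_pow_left₀ (by linarith) (by linarith) m
  rw [measureReal_def, annularSlab_eq_preimage r ε hnorm, hΦ.measure_preimage_equiv,
    Measure.volume_eq_prod, Measure.prod_prod, Real.volume_Icc,
    Measure.addHaar_closedBall_diff_ball volume 0 (by linarith) (by linarith),
    finrank_euclideanSpace_fin, ENNReal.toReal_mul, ENNReal.toReal_mul,
    ENNReal.toReal_ofReal (by linarith), ENNReal.toReal_ofReal (by linarith), measureReal_def]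
  ring

end EuclideanSpace

theorem pow_div_two_le_pow {s : ℝ} (hs0 : 0 ≤ s) (hs1 : s ≤ 1) {a b : ℕ} (hab : a ≤ b) :
    s ^ b / 2 ≤ s ^ a := by
  linarith [pow_le_pow_of_le_one hs0 hs1 hab, pow_nonneg hs0 b]

theorem mul_mul_pow_le_mul_add_pow_sub_sub_pow {r ε : ℝ} (hr : 0 < r) (hε : 0 ≤ ε) (hεr : ε ≤ r)
    (m : ℕ) : m * ε * r ^ m ≤ r * ((r + ε) ^ m - (r - ε) ^ m) := by
  have bernoulli : r ^ m * (1 + m * (ε / r)) ≤ (r + ε) ^ m := by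
    calc r ^ m * (1 + m * (ε / r)) ≤ r ^ m * (1 + ε / r) ^ m := by
          gcongr; exact one_add_mul_le_pow (by linarith [div_nonneg hε hr.le]) m
      _ = (r + ε) ^ m := by rw [← mul_pow]; field_simp
  have hsub : (r - ε) ^ m ≤ r ^ m := pow_le_pow_left₀ (by linarith) (by linarith) m
  have hexpand : r * (r ^ m * (1 + m * (ε / r))) = r * r ^ m + m * ε * r ^ m := by
    field_simp
  nlinarith [mul_le_mul_of_nonneg_left bernoulli hr.le, mul_le_mul_of_nonneg_left hsub hr.le]

/-- The theorem's inequality with `s = 1 / (m + 1)`, once the unit-ball volumes have been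
cancelled using `ωₘ₊₁ ≤ 2 ωₘ`. -/
theorem slab_ratio_bound {s : ℝ} (hs0 : 0 < s) (hs1 : s ≤ 1) {m : ℕ} (hm : 2 ≤ m)
    (hexp : (1 + s) ^ (m + 1) ≤ 3) :
    s ^ 180 / 10 * (s ^ 10 + s ^ 11) ^ (m + 1) ≤
      s ^ 100 / 2 * ((s ^ 10 + s ^ 100 / 2) ^ m - (s ^ 10 - s ^ 100 / 2) ^ m) := by
  have hr : 0 < s ^ 10 := by positivity
  have hεr : s ^ 100 / 2 ≤ s ^ 10 := pow_div_two_le_pow hs0.le hs1 (by norm_num)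
  have hD := mul_mul_pow_le_mul_add_pow_sub_sub_pow hr (by positivity) hεr m
  have hm' : (2 : ℝ) ≤ m := by exact_mod_cast hm
  refine le_of_mul_le_mul_left ?_ hr
  calc s ^ 10 * (s ^ 180 / 10 * (s ^ 10 + s ^ 11) ^ (m + 1))
      = s ^ 200 / 10 * (s ^ 10) ^ m * (1 + s) ^ (m + 1) := by
        rw [show s ^ 10 + s ^ 11 = s ^ 10 * (1 + s) by ring, mul_pow]; ring
    _ ≤ s ^ 200 / 10 * (s ^ 10) ^ m * 3 := by gcongr
    _ ≤ m * (s ^ 100 / 2) * (s ^ 10) ^ m * (s ^ 100 / 2) := by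
        have : 0 ≤ s ^ 200 * (s ^ 10) ^ m := by positivity
        nlinarith
    _ ≤ s ^ 10 * ((s ^ 10 + s ^ 100 / 2) ^ m - (s ^ 10 - s ^ 100 / 2) ^ m) * (s ^ 100 / 2) := by
        gcongr
    _ = _ := by ring

theorem annular_slab_volume_ratio :
    ∃ N : ℕ, ∀ n : ℕ, N ≤ n →
      ∀ y : EuclideanSpace ℝ (Fin n), y ≠ 0 →
        (volume {z : EuclideanSpace ℝ (Fin n) |
            |‖z - (((inner ℝ y z : ℝ) / ‖y‖ ^ 2) • y)‖ - (n : ℝ) ^ (-10 : ℤ)| ≤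
              (n : ℝ) ^ (-100 : ℤ) / 2 ∧
            ‖((inner ℝ y z : ℝ) / ‖y‖ ^ 2) • y‖ ≤ (n : ℝ) ^ (-100 : ℤ) / 2}).toReal /
          (volume (Metric.closedBall (0 : EuclideanSpace ℝ (Fin n))
            ((n : ℝ) ^ (-10 : ℤ) + (n : ℝ) ^ (-11 : ℤ)))).toReal ≥
        (n : ℝ) ^ (-180 : ℤ) / 10 := by
  refine ⟨3, fun n hn y hy => ?_⟩
  obtain ⟨m, rfl⟩ : ∃ m, n = m + 1 := ⟨n - 1, by omega⟩
  have : NeZero m := ⟨by omega⟩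
  simp only [zpow_neg, zpow_ofNat, ← inv_pow]
  set s := ((m + 1 : ℕ) : ℝ)⁻¹
  have hs0 : 0 < s := by positivity
  have hs1 : s ≤ 1 := inv_le_one_of_one_le₀ (by simp)
  have hexp : (1 + s) ^ (m + 1) ≤ 3 :=
    Real.one_add_inv_pow_le_exp.trans (Real.exp_one_lt_d9.le.trans (by norm_num))
  have hεr : s ^ 100 / 2 ≤ s ^ 10 := pow_div_two_le_pow hs0.le hs1 (by norm_num)
  have hpos (k : ℕ) : 0 < volume.real (ball (0 : EuclideanSpace ℝ (Fin k)) 1) :=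
    ENNReal.toReal_pos (measure_ball_pos volume 0 one_pos).ne' measure_ball_lt_top.ne
  change volume.real (annularSlab y (s ^ 10) (s ^ 100 / 2)) /
    volume.real (closedBall 0 (s ^ 10 + s ^ 11)) ≥ _
  rw [EuclideanSpace.measureReal_annularSlab hy (by positivity) hεr,
    Measure.addHaar_real_closedBall volume 0 (by positivity), finrank_euclideanSpace_fin,
    ge_iff_le, le_div_iff₀ (mul_pos (by positivity) (hpos _))]
  set ω := volume.real (ball (0 : EuclideanSpace ℝ (Fin m)) 1)
  calc s ^ 180 / 10 * ((s ^ 10 + s ^ 11) ^ (m + 1) *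
        volume.real (ball (0 : EuclideanSpace ℝ (Fin (m + 1))) 1))
      ≤ s ^ 180 / 10 * (s ^ 10 + s ^ 11) ^ (m + 1) * (2 * ω) := by
        rw [mul_assoc]; gcongr; exact EuclideanSpace.measureReal_ball_succ_le
    _ ≤ s ^ 100 / 2 * ((s ^ 10 + s ^ 100 / 2) ^ m - (s ^ 10 - s ^ 100 / 2) ^ m) * (2 * ω) :=
        mul_le_mul_of_nonneg_right (slab_ratio_bound hs0 hs1 (by omega) hexp)
          (by linarith [hpos m])
    _ = _ := by ring
end
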